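/- arXiv:1008.2149 — 3 statements merged into one kernel-verified Lean document; each statement's English description precedes it below -/
import Mathlib

section
/- Let n ≥ 3 and d ≥ 1 be integers, and write (1 + z + ... + z^d)^(2n) = a_0 + a_1 z + ... + a_{2nd} z^{2nd}. Then a_{nd} - a_{nd-1} ≤ a_{nd-d-1} - a_{nd-d-2}. -/
/-!
Write `a(m, k)` for the coefficient of `z^k` in `(1 + z + ⋯ + z^d)^m` and
`Δ(m, k) = a(m, k) - a(m, k - 1)`. Multiplying by `1 + z + ⋯ + z^d` gives
`Δ(m + 1, k) = ∑_{t ≤ d} Δ(m, k - t) = a(m, k) - a(m, k - d - 1)`, which together with the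
symmetry `a(m, md - k) = a(m, k)` proves unimodality by induction on `m`.

For the central defect `δ(n) = Δ(2n, nd) - Δ(2n, nd - d - 1)` these identities give
`δ(n + 1) ≤ δ(n)`: by symmetry `Δ(2n + 2, (n + 1)d) = Δ(2n + 1, nd)`, while
`Δ(2n + 2, nd - 1) = ∑_{t ≤ d} Δ(2n + 1, nd - 1 - t) ≥ Δ(2n + 1, nd - 1)` by unimodality, and
`Δ(2n + 1, nd) - Δ(2n + 1, nd - 1) = δ(n)`. It remains to see `δ(3) ≤ 0`, which follows from
`δ(2) = 1 - a(3, d - 2) ≤ 0` when `d ≥ 2`, and is a direct computation for `d = 1`.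
-/

open Finset Polynomial

theorem sum_range_sub_sub_one {G : Type*} [AddCommGroup G] (f : ℤ → G) (k : ℤ) (n : ℕ) :
    ∑ t ∈ range n, (f (k - t) - f (k - t - 1)) = f k - f (k - n) := by
  have := sum_range_sub' (fun t : ℕ => f (k - t)) n
  simp only [Nat.cast_add, Nat.cast_one, Nat.cast_zero, sub_zero] at this
  simpa only [sub_add_eq_sub_sub] using this

/-- `a_k` of `(1 + z + ⋯ + z^d)^m`, indexed by all integers `k` (zero outside `0, …, md`). -/
def boxCoeff (d : ℕ) : ℕ → ℤ → ℤ
  | 0, k => if k = 0 then 1 else 0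
  | m + 1, k => ∑ j ∈ range (d + 1), boxCoeff d m (k - j)

def boxDiff (d m : ℕ) (k : ℤ) : ℤ := boxCoeff d m k - boxCoeff d m (k - 1)

section

variable {d m : ℕ} {k : ℤ}

theorem boxCoeff_zero_left : boxCoeff d 0 k = if k = 0 then 1 else 0 := rfl

theorem boxCoeff_succ : boxCoeff d (m + 1) k = ∑ j ∈ range (d + 1), boxCoeff d m (k - j) := rfl

theorem boxCoeff_of_neg (hk : k < 0) : boxCoeff d m k = 0 := by
  induction m generalizing k with
  | zero => simp [boxCoeff_zero_left, hk.ne]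
  | succ m ih => exact sum_eq_zero fun j _ => ih (by omega)

theorem boxCoeff_nonneg : 0 ≤ boxCoeff d m k := by
  induction m generalizing k with
  | zero => rw [boxCoeff_zero_left]; split_ifs <;> norm_num
  | succ m ih => exact sum_nonneg fun j _ => ih

theorem boxCoeff_zero_right : boxCoeff d m 0 = 1 := by
  induction m with
  | zero => rfl
  | succ m ih =>
    rw [boxCoeff_succ, sum_eq_single 0 (fun j _ hj => boxCoeff_of_neg (by omega)) (by simp)]
    simpa using ih

theorem boxCoeff_mul_sub (k : ℤ) : boxCoeff d m (m * d - k) = boxCoeff d m k := by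
  induction m generalizing k with
  | zero => simp [boxCoeff_zero_left]
  | succ m ih =>
    rw [boxCoeff_succ, boxCoeff_succ, ← sum_range_reflect]
    refine sum_congr rfl fun j hj => ?_
    rw [← ih]
    congr 1
    have := mem_range.mp hj
    push_cast [Nat.cast_sub (show j ≤ d by omega)]
    ring

theorem boxDiff_succ : boxDiff d (m + 1) k = ∑ t ∈ range (d + 1), boxDiff d m (k - t) := by
  simp only [boxDiff, boxCoeff_succ, ← sum_sub_distrib, sub_right_comm]

theorem boxDiff_succ_eq : boxDiff d (m + 1) k = boxCoeff d m k - boxCoeff d m (k - d - 1) := by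
  rw [boxDiff_succ]
  simp only [boxDiff, sum_range_sub_sub_one (boxCoeff d m), Nat.cast_add, Nat.cast_one,
    sub_add_eq_sub_sub]

theorem boxDiff_succ_of_le (hk : k ≤ d) : boxDiff d (m + 1) k = boxCoeff d m k := by
  rw [boxDiff_succ_eq, boxCoeff_of_neg (by omega : k - d - 1 < 0), sub_zero]

theorem boxCoeff_monotoneOn : MonotoneOn (boxCoeff d m) {j | 2 * j ≤ m * d} := by
  induction m with
  | zero =>
    intro i _ j hj hij
    rcases hij.lt_or_eq with h | rfl
    · rw [boxCoeff_of_neg (by simp at hj; omega)]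
      exact boxCoeff_nonneg
    · rfl
  | succ m ih =>
    refine monotoneOn_of_le_succ (IsLowerSet.ordConnected fun a b hba ha => ?_) fun j _ _ hj => ?_
    · simp only [Set.mem_ofPred_eq] at ha ⊢
      omega
    rw [Order.succ_eq_add_one] at hj ⊢
    simp only [Set.mem_ofPred_eq, Nat.cast_add, Nat.cast_one, add_one_mul] at hj
    suffices boxCoeff d m (j - d) ≤ boxCoeff d m (j + 1) by
      have := boxDiff_succ_eq (d := d) (m := m) (k := j + 1)
      simp only [boxDiff, add_sub_cancel_right] at this
      rw [show j + 1 - d - 1 = j - d by ring] at this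
      linarith
    rcases le_or_gt (2 * (j + 1)) (m * d) with h | h
    · exact ih (by simp; omega) h (by omega)
    · rw [← boxCoeff_mul_sub (j + 1)]
      exact ih (by simp; omega) (by simp; omega) (by omega)

theorem boxDiff_nonneg (hk : 2 * k ≤ m * d) : 0 ≤ boxDiff d m k :=
  sub_nonneg.mpr (boxCoeff_monotoneOn (by simp; omega) hk (by omega))

end

theorem boxDiff_add_two_sub_le {d m : ℕ} {k : ℤ} (hk : 2 * k = m * d) :
    boxDiff d (m + 2) (k + d) - boxDiff d (m + 2) (k - 1) ≤
      boxDiff d m k - boxDiff d m (k - d - 1) := by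
  have h_top : boxDiff d (m + 2) (k + d) = boxDiff d (m + 1) k := by
    rw [boxDiff_succ_eq, show k + d - d - 1 = k - 1 by ring, ← boxCoeff_mul_sub (k + d)]
    congr 2
    push_cast
    linarith
  have h_bot : boxDiff d (m + 1) (k - 1) ≤ boxDiff d (m + 2) (k - 1) := by
    rw [boxDiff_succ (m := m + 1)]
    simpa using single_le_sum
      (fun (t : ℕ) _ => boxDiff_nonneg (d := d) (m := m + 1) (k := k - 1 - t)
        (by push_cast [add_one_mul]; omega))
      (mem_range.mpr d.succ_pos)
  have h₁ := boxDiff_succ_eq (d := d) (m := m) (k := k)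
  have h₂ := boxDiff_succ_eq (d := d) (m := m) (k := k - 1)
  simp only [boxDiff] at h_top h_bot h₁ h₂ ⊢
  rw [show k - 1 - d - 1 = k - d - 1 - 1 by ring] at h₂
  linarith

def centralDefect (d n : ℕ) : ℤ :=
  boxDiff d (2 * n) (n * d) - boxDiff d (2 * n) (n * d - d - 1)

theorem centralDefect_antitone (d : ℕ) : Antitone (centralDefect d) := by
  refine antitone_nat_of_succ_le fun n => ?_
  have h := boxDiff_add_two_sub_le (d := d) (m := 2 * n) (k := n * d) (by push_cast; ring)
  rwa [show 2 * n + 2 = 2 * (n + 1) by ring,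
    show (n * d + d : ℤ) = (n + 1 : ℕ) * d by push_cast; ring,
    show (n * d - 1 : ℤ) = (n + 1 : ℕ) * d - d - 1 by push_cast; ring] at h

theorem centralDefect_two_nonpos {d : ℕ} (hd : 2 ≤ d) : centralDefect d 2 ≤ 0 := by
  rw [centralDefect, show 2 * 2 = 3 + 1 from rfl, boxDiff_succ_eq,
    boxDiff_succ_of_le (by push_cast; omega)]
  have h_symm : boxCoeff d 3 (2 * d) = boxCoeff d 3 d := by
    rw [← boxCoeff_mul_sub (d : ℤ)]
    congr 1
    push_cast
    ring
  have h₃ : boxCoeff d 3 d - boxCoeff d 3 (d - 1) = boxCoeff d 2 d := boxDiff_succ_of_le le_rfl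
  have h_one : boxCoeff d 1 d = 1 := by
    simpa [boxCoeff_zero_right] using (boxCoeff_mul_sub (d := d) (m := 1) d).symm
  have h₂ : boxCoeff d 2 d - boxCoeff d 2 (d - 1) = boxCoeff d 1 d := boxDiff_succ_of_le le_rfl
  have h₃' : boxCoeff d 3 (d - 1) - boxCoeff d 3 (d - 1 - 1) = boxCoeff d 2 (d - 1) :=
    boxDiff_succ_of_le (by omega)
  have h_pos : boxCoeff d 3 0 ≤ boxCoeff d 3 (d - 1 - 1) :=
    boxCoeff_monotoneOn (by simp) (by simp; omega) (by omega)
  rw [boxCoeff_zero_right] at h_pos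
  push_cast
  rw [show (2 * d - d - 1 : ℤ) = d - 1 by ring]
  linarith

theorem centralDefect_three_nonpos {d : ℕ} (hd : 1 ≤ d) : centralDefect d 3 ≤ 0 := by
  obtain rfl | hd := hd.eq_or_lt
  -- binomial coefficients: `C(6,3) - C(6,2) ≤ C(6,1) - C(6,0)`
  · decide
  · exact (centralDefect_antitone d (by norm_num)).trans (centralDefect_two_nonpos hd)

theorem coeff_geomSum_pow (d m t : ℕ) :
    ((∑ i ∈ range (d + 1), (X : ℤ[X]) ^ i) ^ m).coeff t = boxCoeff d m t := by
  induction m generalizing t with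
  | zero => simp [boxCoeff_zero_left, coeff_one]
  | succ m ih =>
    rw [pow_succ, mul_sum, finsetSum_coeff, boxCoeff_succ]
    refine sum_congr rfl fun j _ => ?_
    rw [coeff_mul_X_pow']
    split_ifs with h
    · rw [ih, Nat.cast_sub h]
    · rw [boxCoeff_of_neg (by omega)]

/-- Coefficients of `(1 + z + ⋯ + z^d)^(2n)`:
`a_{nd} - a_{nd-1} ≤ a_{nd-d-1} - a_{nd-d-2}`. -/
theorem stmt_0 (n d : ℕ) (hn : 3 ≤ n) (hd : 1 ≤ d)
    (P : Polynomial ℤ)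
    (hP : P = (∑ i ∈ Finset.range (d + 1), (Polynomial.X : Polynomial ℤ) ^ i) ^ (2 * n)) :
    P.coeff (n * d) - P.coeff (n * d - 1) ≤
      P.coeff (n * d - d - 1) - P.coeff (n * d - d - 2) := by
  have h := sub_nonpos.mp ((centralDefect_antitone d hn).trans (centralDefect_three_nonpos hd))
  have hnd : d + 2 ≤ n * d := by nlinarith
  simp only [hP, coeff_geomSum_pow, boxDiff] at h ⊢
  rwa [Nat.cast_mul, show ((n * d - 1 : ℕ) : ℤ) = n * d - 1 by omega,
    show ((n * d - d - 1 : ℕ) : ℤ) = n * d - d - 1 by omega,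
    show ((n * d - d - 2 : ℕ) : ℤ) = n * d - d - 1 - 1 by omega]
end

section
/- Let d ≥ 4 and write the alternating Hilbert-function difference D(j,d) = binom(j+5,5) - 8·binom(j+5-d,5) + 28·binom(j+5-2d,5) - 56·binom(j+5-3d,5), evaluated at j = floor(17(d-1)/5). Then D(j,d) ≤ 0. -/
/-!
Write `d = 5 t + e` with `t ≥ 0` and `4 ≤ e ≤ 8`; then `j = 17 t + ⌊17 (e - 1) / 5⌋`, and all four
arguments of `binom5` are nonnegative, so each `120 · binom(a, 5)` is the falling factorial
`a (a - 1) ⋯ (a - 4)`. For each of the five values of `e`, `120 · D(j, d)` is therefore a quintic in `t`,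
and all of its coefficients turn out to be negative.
-/

/-- `binom(a,5)` with the convention that it vanishes for `a < 5`. -/
def binom5 (a : ℤ) : ℤ := (a.toNat.choose 5 : ℤ)

lemma mul_binom5 {a : ℤ} (ha : 0 ≤ a) :
    120 * binom5 a = a * (a - 1) * (a - 2) * (a - 3) * (a - 4) := by
  lift a to ℕ using ha
  have h := congrArg (Nat.cast : ℕ → ℤ) (Nat.descFactorial_eq_factorial_mul_choose a 5)
  rw [← descPochhammer_eval_eq_descFactorial] at h
  simp only [descPochhammer_succ_right, descPochhammer_zero, CharP.cast_eq_zero, sub_zero, one_mul,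
    Nat.cast_one, Nat.cast_ofNat, Polynomial.eval_mul, Polynomial.eval_X, Polynomial.eval_sub,
    Polynomial.eval_one, Polynomial.eval_ofNat, Nat.factorial, Nat.succ_eq_add_one, Nat.reduceAdd,
    zero_add, mul_one, Nat.reduceMul, Nat.cast_mul] at h
  simp only [binom5, Int.toNat_natCast]
  linear_combination -h

/-- The alternating sum `D(j, d)` of the statement. -/
def hilbertDiff (d j : ℤ) : ℤ :=
  binom5 (j + 5) - 8 * binom5 (j + 5 - d) + 28 * binom5 (j + 5 - 2 * d)
    - 56 * binom5 (j + 5 - 3 * d)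

lemma mul_hilbertDiff {d j : ℤ} (hd : 0 ≤ d) (hj : 3 * d ≤ j + 5) :
    120 * hilbertDiff d j =
      (j + 5) * (j + 4) * (j + 3) * (j + 2) * (j + 1)
        - 8 * ((j + 5 - d) * (j + 4 - d) * (j + 3 - d) * (j + 2 - d) * (j + 1 - d))
        + 28 * ((j + 5 - 2 * d) * (j + 4 - 2 * d) * (j + 3 - 2 * d) * (j + 2 - 2 * d)
          * (j + 1 - 2 * d))
        - 56 * ((j + 5 - 3 * d) * (j + 4 - 3 * d) * (j + 3 - 3 * d) * (j + 2 - 3 * d)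
          * (j + 1 - 3 * d)) := by
  have h₀ := mul_binom5 (a := j + 5) (by omega)
  have h₁ := mul_binom5 (a := j + 5 - d) (by omega)
  have h₂ := mul_binom5 (a := j + 5 - 2 * d) (by omega)
  have h₃ := mul_binom5 (a := j + 5 - 3 * d) (by omega)
  unfold hilbertDiff
  linear_combination h₀ - 8 * h₁ + 28 * h₂ - 56 * h₃

lemma hilbertDiff_nonpos {t e : ℤ} (ht : 0 ≤ t) (he₄ : 4 ≤ e) (he₈ : e ≤ 8) :
    hilbertDiff (5 * t + e) (17 * (5 * t + e - 1) / 5) ≤ 0 := by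
  suffices 120 * hilbertDiff (5 * t + e) (17 * (5 * t + e - 1) / 5) ≤ 0 by linarith
  rw [mul_hilbertDiff (by omega) (by omega)]
  interval_cases e
  · rw [show 17 * (5 * t + 4 - 1) / 5 = 17 * t + 10 by omega]
    calc _ = -(12600 + 107910 * t + 336365 * t ^ 2 + 499175 * t ^ 3 + 359875 * t ^ 4
              + 101995 * t ^ 5) := by ring
      _ ≤ 0 := neg_nonpos.mpr (by positivity)
  · rw [show 17 * (5 * t + 5 - 1) / 5 = 17 * t + 13 by omega]
    calc _ = -(19200 + 182780 * t + 533800 * t ^ 2 + 698025 * t ^ 3 + 429800 * t ^ 4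
              + 101995 * t ^ 5) := by ring
      _ ≤ 0 := neg_nonpos.mpr (by positivity)
  · rw [show 17 * (5 * t + 6 - 1) / 5 = 17 * t + 17 by omega]
    calc _ = -(186480 + 835740 * t + 1486860 * t ^ 2 + 1315625 * t ^ 3 + 579900 * t ^ 4
              + 101995 * t ^ 5) := by ring
      _ ≤ 0 := neg_nonpos.mpr (by positivity)
  · rw [show 17 * (5 * t + 7 - 1) / 5 = 17 * t + 20 by omega]
    calc _ = -(297360 + 1247630 * t + 2041055 * t ^ 2 + 1639575 * t ^ 3 + 649825 * t ^ 4
              + 101995 * t ^ 5) := by ring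
      _ ≤ 0 := neg_nonpos.mpr (by positivity)
  · rw [show 17 * (5 * t + 8 - 1) / 5 = 17 * t + 23 by omega]
    calc _ = -(429120 + 1747560 * t + 2688670 * t ^ 2 + 1993025 * t ^ 3 + 719750 * t ^ 4
              + 101995 * t ^ 5) := by ring
      _ ≤ 0 := neg_nonpos.mpr (by positivity)

theorem stmt_2 (d j : ℤ) (hd : 4 ≤ d) (hj : j = (17 * (d - 1)) / 5) :
    binom5 (j + 5) - 8 * binom5 (j + 5 - d) + 28 * binom5 (j + 5 - 2 * d)
      - 56 * binom5 (j + 5 - 3 * d) ≤ 0 := by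
  obtain ⟨t, e, ht, he₄, he₈, rfl⟩ : ∃ t e, 0 ≤ t ∧ 4 ≤ e ∧ e ≤ 8 ∧ d = 5 * t + e :=
    ⟨(d - 4) / 5, 4 + (d - 4) % 5, by omega, by omega, by omega, by omega⟩
  subst hj
  exact hilbertDiff_nonpos ht he₄ he₈
end

section
/- Let a_1 ≤ a_2 ≤ a_3 ≤ a_4 ≤ a_5 be integers with a_1+a_2+a_3+a_4 even, λ = (a_1+a_2+a_3+a_4)/2 - 2, a_5 < λ, and a_1 + a_4 ≥ a_2 + a_3. Then (a_5 - a_4 + 1) - [binom(λ+2,2) - Σ_{i=1}^4 binom(λ-a_i+2,2) + Σ_{1≤i<j≤3} binom(λ-a_i-a_j+2,2) - binom(λ-a_5+2,2)] = binom(λ+1-a_5, 2), and this binomial coefficient is at least 1. -/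
/-!
Under the hypotheses every argument of `binom2` in the statement is nonnegative (the three pair
terms because `λ - aᵢ - aⱼ + 2` is half of `aₖ + a₄ - aᵢ - aⱼ`), so on each of them
`binom(x, 2) = x (x - 1) / 2`. Eliminating `a₁` through `2λ = a₁ + a₂ + a₃ + a₄ - 4` turns the
claimed equality into a polynomial identity, and `λ + 1 - a₅ ≥ 2` gives the lower bound.
-/

/-- `binom(a,2)` with the convention that it vanishes for `a < 2`. -/
def binom2 (a : ℤ) : ℤ := (a.toNat.choose 2 : ℤ)

lemma two_mul_binom2 {x : ℤ} (hx : 0 ≤ x) : 2 * binom2 x = x * (x - 1) := by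
  obtain ⟨n, rfl⟩ := Int.eq_ofNat_of_zero_le hx
  rw [binom2, Int.toNat_natCast]
  have h := Nat.cast_choose_two ℚ n
  have : ((2 * n.choose 2 : ℤ) : ℚ) = ((n * (n - 1) : ℤ) : ℚ) := by push_cast; linarith
  exact_mod_cast this

lemma one_le_binom2 {x : ℤ} (hx : 2 ≤ x) : 1 ≤ binom2 x := by
  rw [binom2, Nat.one_le_cast]
  exact Nat.choose_pos (by omega)

theorem stmt_7_general (a₁ a₂ a₃ a₄ a₅ lam : ℤ)
    (h12 : a₁ ≤ a₂) (h23 : a₂ ≤ a₃) (h45 : a₄ ≤ a₅)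
    (hlam : 2 * lam = a₁ + a₂ + a₃ + a₄ - 4)
    (h5 : a₅ < lam) (hsum : a₂ + a₃ ≤ a₁ + a₄) :
    (a₅ - a₄ + 1) -
      (binom2 (lam + 2)
        - (binom2 (lam - a₁ + 2) + binom2 (lam - a₂ + 2) + binom2 (lam - a₃ + 2)
            + binom2 (lam - a₄ + 2))
        + (binom2 (lam - a₁ - a₂ + 2) + binom2 (lam - a₁ - a₃ + 2) + binom2 (lam - a₂ - a₃ + 2))
        - binom2 (lam - a₅ + 2)) = binom2 (lam + 1 - a₅) ∧
    1 ≤ binom2 (lam + 1 - a₅) := by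
  refine ⟨?_, one_le_binom2 (by linarith)⟩
  have e0 := two_mul_binom2 (x := lam + 2) (by linarith)
  have e1 := two_mul_binom2 (x := lam - a₁ + 2) (by linarith)
  have e2 := two_mul_binom2 (x := lam - a₂ + 2) (by linarith)
  have e3 := two_mul_binom2 (x := lam - a₃ + 2) (by linarith)
  have e4 := two_mul_binom2 (x := lam - a₄ + 2) (by linarith)
  have e5 := two_mul_binom2 (x := lam - a₅ + 2) (by linarith)
  have e12 := two_mul_binom2 (x := lam - a₁ - a₂ + 2) (by linarith)
  have e13 := two_mul_binom2 (x := lam - a₁ - a₃ + 2) (by linarith)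
  have e23 := two_mul_binom2 (x := lam - a₂ - a₃ + 2) (by linarith)
  have eD := two_mul_binom2 (x := lam + 1 - a₅) (by linarith)
  obtain rfl : a₁ = 2 * lam + 4 - a₂ - a₃ - a₄ := by linarith
  apply mul_left_cancel₀ (two_ne_zero : (2 : ℤ) ≠ 0)
  linear_combination -e0 + e1 + e2 + e3 + e4 - e12 - e13 - e23 + e5 - eD

theorem stmt_7 (a₁ a₂ a₃ a₄ a₅ lam : ℤ)
    (h12 : a₁ ≤ a₂) (h23 : a₂ ≤ a₃) (h34 : a₃ ≤ a₄) (h45 : a₄ ≤ a₅)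
    (heven : Even (a₁ + a₂ + a₃ + a₄))
    (hlam : 2 * lam = a₁ + a₂ + a₃ + a₄ - 4)
    (h5 : a₅ < lam) (hsum : a₂ + a₃ ≤ a₁ + a₄) :
    (a₅ - a₄ + 1) -
      (binom2 (lam + 2)
        - (binom2 (lam - a₁ + 2) + binom2 (lam - a₂ + 2) + binom2 (lam - a₃ + 2)
            + binom2 (lam - a₄ + 2))
        + (binom2 (lam - a₁ - a₂ + 2) + binom2 (lam - a₁ - a₃ + 2) + binom2 (lam - a₂ - a₃ + 2))
        - binom2 (lam - a₅ + 2)) = binom2 (lam + 1 - a₅) ∧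
    1 ≤ binom2 (lam + 1 - a₅) :=
  stmt_7_general a₁ a₂ a₃ a₄ a₅ lam h12 h23 h45 hlam h5 hsum
end
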